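/- Let (M,d) be a metric space and let y : [0,∞) → M be continuous and periodic, i.e. there exists T₁ > 0 with y(t + T₁) = y(t) for all t ≥ 0. Then y satisfies (GRC) for every ε > 0. -/
import Mathlib


open MeasureTheory Filter

/-- A map `y : [0,∞) → M` (modeled on `ℝ`) satisfies the Geodesic Recurrence Condition (GRC)
for `ε > 0` if there are a point `p ∈ M` and a radius `0 < r < ε` such that
`liminf_{T→∞} (1/T)·λ({t ∈ [0,T] : d(y t, p) < r}) > 0`. -/
def SatisfiesGRC {M : Type*} [MetricSpace M] (y : ℝ → M) (ε : ℝ) : Prop :=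
  ∃ p : M, ∃ r : ℝ, 0 < r ∧ r < ε ∧
    0 < Filter.liminf
      (fun T : ℝ => (volume {t ∈ Set.Icc (0 : ℝ) T | dist (y t) p < r}).toReal / T) Filter.atTop

/-- A continuous periodic map `y : [0,∞) → M` satisfies (GRC) for every `ε > 0`. -/
theorem statement_3 {M : Type*} [MetricSpace M] (y : ℝ → M)
    (hy : ContinuousOn y (Set.Ici (0 : ℝ)))
    (T₁ : ℝ) (hT₁ : 0 < T₁) (hper : ∀ t : ℝ, 0 ≤ t → y (t + T₁) = y t)
    (ε : ℝ) (hε : 0 < ε) : SatisfiesGRC y ε := by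
  -- iterated periodicity
  have hperk : ∀ (k : ℕ) (s : ℝ), 0 ≤ s → y (s + k * T₁) = y s := by
    intro k
    induction k with
    | zero => intro s hs; simp
    | succ n ih =>
      intro s hs
      have h1 : s + ((n : ℕ) + 1 : ℕ) * T₁ = (s + n * T₁) + T₁ := by push_cast; ring
      have h2 : (0:ℝ) ≤ s + n * T₁ := by positivity
      rw [h1, hper _ h2, ih s hs]
  set p := y 0 with hp
  have hr : 0 < ε / 2 := by positivity
  -- continuity at 0 gives δ'
  have hc : ContinuousWithinAt y (Set.Ici (0:ℝ)) 0 := hy 0 (Set.mem_Ici.mpr le_rfl)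
  rw [Metric.continuousWithinAt_iff] at hc
  obtain ⟨δ', hδ', hδ'c⟩ := hc (ε/2) hr
  set δ := min δ' T₁ with hδdef
  have hδpos : 0 < δ := lt_min hδ' hT₁
  have hδT₁ : δ ≤ T₁ := min_le_right _ _
  have hδδ' : δ ≤ δ' := min_le_left _ _
  -- pointwise: on [kT₁, kT₁+δ) we have dist (y t) p < ε/2
  have hpt : ∀ (k : ℕ) (t : ℝ), t ∈ Set.Ico ((k:ℝ) * T₁) ((k:ℝ) * T₁ + δ) →
      dist (y t) p < ε / 2 := by
    intro k t ht
    obtain ⟨ht1, ht2⟩ := ht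
    set s := t - k * T₁ with hs
    have hs0 : 0 ≤ s := by
      have hk0 : (0:ℝ) ≤ (k:ℝ) * T₁ := by positivity
      simp only [hs]
      linarith
    have hsδ : s < δ := by simp only [hs]; linarith
    have hys : y t = y s := by
      have ht' : t = s + k * T₁ := by ring
      rw [ht', hperk k s hs0]
    rw [hys]
    exact hδ'c (x := s) (Set.mem_Ici.mpr hs0) (by
      rw [Real.dist_eq, sub_zero, abs_of_nonneg hs0]; exact lt_of_lt_of_le hsδ hδδ')
  -- lower bound on measure of good set
  have key : ∀ T : ℝ, 2 * T₁ ≤ T →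
      δ / (2 * T₁) ≤ (volume {t ∈ Set.Icc (0:ℝ) T | dist (y t) p < ε/2}).toReal / T := by
    intro T hT
    have hTpos : 0 < T := lt_of_lt_of_le (by positivity) hT
    set n := ⌊T / T₁⌋₊ with hn
    have hdiv2 : (2:ℝ) ≤ T / T₁ := (le_div_iff₀ hT₁).mpr (by linarith)
    have hnT : (n : ℝ) * T₁ ≤ T := by
      have hfl := Nat.floor_le (by positivity : (0:ℝ) ≤ T / T₁)
      calc (n:ℝ) * T₁ ≤ (T / T₁) * T₁ := by nlinarith
        _ = T := by field_simp
    have hnlb : T / (2 * T₁) ≤ (n : ℝ) := by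
      have h1 : T / T₁ - 1 < (n : ℝ) := Nat.sub_one_lt_floor _
      have hTT : T / T₁ * T₁ = T := div_mul_cancel₀ _ hT₁.ne'
      have h2 : T / (2 * T₁) ≤ T / T₁ - 1 := by
        rw [div_le_iff₀ (by positivity : (0:ℝ) < 2 * T₁)]
        nlinarith [(le_div_iff₀ hT₁).mp hdiv2]
      linarith
    -- the union of intervals is inside the good set
    set U : Set ℝ := ⋃ k ∈ Finset.range n, Set.Ico ((k:ℝ) * T₁) ((k:ℝ) * T₁ + δ) with hU
    have hUsub : U ⊆ {t ∈ Set.Icc (0:ℝ) T | dist (y t) p < ε/2} := by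
      intro t ht
      simp only [hU, Set.mem_iUnion, Finset.mem_range] at ht
      obtain ⟨k, hk, hkt⟩ := ht
      refine ⟨⟨?_, ?_⟩, hpt k t hkt⟩
      · have hk0 : (0:ℝ) ≤ (k:ℝ) * T₁ := by positivity
        linarith [hkt.1]
      · have hk1 : (k:ℝ) + 1 ≤ (n:ℝ) := by exact_mod_cast hk
        have : (k:ℝ) * T₁ + δ ≤ (n:ℝ) * T₁ := by nlinarith
        linarith [hkt.2]
    have hUvol : volume U = n * ENNReal.ofReal δ := by
      rw [hU, measure_biUnion_finset]
      · simp [Real.volume_Ico, Finset.sum_const]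
      · intro i _ j _ hij
        simp only [Function.onFun, Set.disjoint_left]
        intro x hx1 hx2
        rcases lt_or_gt_of_ne hij with h | h
        · have hij' : (i:ℝ) + 1 ≤ (j:ℝ) := by exact_mod_cast h
          nlinarith [hx1.2, hx2.1, hx1.1, hx2.2]
        · have hij' : (j:ℝ) + 1 ≤ (i:ℝ) := by exact_mod_cast h
          nlinarith [hx1.1, hx2.2, hx1.2, hx2.1]
      · intro i _
        exact measurableSet_Ico
    have hfin : volume {t ∈ Set.Icc (0:ℝ) T | dist (y t) p < ε/2} ≠ ⊤ := by
      apply ne_top_of_le_ne_top _ (measure_mono (Set.sep_subset _ _))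
      simp [Real.volume_Icc]
    have hmono : (n:ℝ) * δ ≤ (volume {t ∈ Set.Icc (0:ℝ) T | dist (y t) p < ε/2}).toReal := by
      have h1 : volume U ≤ volume {t ∈ Set.Icc (0:ℝ) T | dist (y t) p < ε/2} :=
        measure_mono hUsub
      have h2 : (volume U).toReal = n * δ := by
        rw [hUvol, ENNReal.toReal_mul, ENNReal.toReal_ofReal hδpos.le]
        simp
      have hUfin : volume U ≠ ⊤ := by
        rw [hUvol]
        exact ENNReal.mul_ne_top (by simp) ENNReal.ofReal_ne_top
      rw [← h2]
      exact (ENNReal.toReal_le_toReal hUfin hfin).mpr h1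
    rw [div_le_div_iff₀ (by positivity) hTpos]
    have hcancel : T / (2 * T₁) * (2 * T₁) = T := div_mul_cancel₀ _ (by positivity)
    nlinarith [mul_le_mul_of_nonneg_right hmono (by positivity : (0:ℝ) ≤ 2 * T₁),
      mul_le_mul_of_nonneg_right hnlb (by positivity : (0:ℝ) ≤ δ * (2 * T₁))]
  -- conclude about liminf
  refine ⟨p, ε/2, hr, by linarith, ?_⟩
  have hev : ∀ᶠ T in atTop, δ / (2 * T₁) ≤
      (volume {t ∈ Set.Icc (0:ℝ) T | dist (y t) p < ε/2}).toReal / T :=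
    eventually_atTop.mpr ⟨2 * T₁, key⟩
  have hub : ∀ᶠ T in atTop,
      (volume {t ∈ Set.Icc (0:ℝ) T | dist (y t) p < ε/2}).toReal / T ≤ 1 := by
    filter_upwards [eventually_ge_atTop (1:ℝ)] with T hT1
    have hT0 : (0:ℝ) ≤ T := by linarith
    have h1 : volume {t ∈ Set.Icc (0:ℝ) T | dist (y t) p < ε/2} ≤ ENNReal.ofReal T := by
      calc _ ≤ volume (Set.Icc (0:ℝ) T) := measure_mono (Set.sep_subset _ _)
        _ = ENNReal.ofReal T := by rw [Real.volume_Icc]; simp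
    have h2 : (volume {t ∈ Set.Icc (0:ℝ) T | dist (y t) p < ε/2}).toReal ≤ T := by
      have h3 := ENNReal.toReal_mono ENNReal.ofReal_ne_top h1
      rwa [ENNReal.toReal_ofReal hT0] at h3
    rw [div_le_one (by linarith)]
    exact h2
  have hcb : IsCoboundedUnder (· ≥ ·) atTop
      (fun T : ℝ => (volume {t ∈ Set.Icc (0:ℝ) T | dist (y t) p < ε/2}).toReal / T) :=
    isCoboundedUnder_ge_of_eventually_le atTop hub
  have hle := le_liminf_of_le hcb hev
  have hpos : 0 < δ / (2 * T₁) := by positivity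
  exact lt_of_lt_of_le hpos hle
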